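/- Let m be a positive integer, F = GF(2^m), and t ≥ 1. Let x and e be binary m-tuples with e ≠ 0, identified with field elements x, e ∈ F, and let e_0, ..., e_{m-1} be the binary coordinates of e. Then (x⊕e) P^t(a) (x⊕e)ᵀ − x P^t(a) xᵀ ≡ 0 (mod 4) holds for every a ∈ F if and only if 1 + (x/e) + (x/e)^{2^t} + Σ_{j=0}^{m-1} e_j·(ξ^j/e)^{2^t+1} = 0 in F, where ⊕ denotes bitwise XOR. -/

import Mathlib

noncomputable section

namespace DGPaper

/-- The absolute trace `GF(2^m) → 𝔽₂`. -/
def tr {m : ℕ} (x : GaloisField 2 m) : ZMod 2 :=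
  Algebra.trace (ZMod 2) (GaloisField 2 m) x

/-- Lift a bit to `ℤ₄`. -/
def lift2 (v : ZMod 2) : ZMod 4 := (v.val : ZMod 4)

/-- `i^v` for `v ∈ ℤ₄`. -/
def zeta (v : ZMod 4) : ℂ := Complex.I ^ v.val

/-- The field element of `GF(2^m)` associated to a binary `m`-tuple via the basis
`1, ξ, …, ξ^{m-1}`. -/
def fld {m : ℕ} (ξ : GaloisField 2 m) (x : Fin m → ZMod 2) : GaloisField 2 m :=
  ∑ j : Fin m, x j • ξ ^ (j : ℕ)

/-- The binary symmetric matrix `P^t(a)`: for `t = 0` it represents the bilinear form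
`(x,y) ↦ Tr(x y a)`, and for `t ≥ 1` the (zero-diagonal) form
`(x,y) ↦ Tr((x y^{2^t} + x^{2^t} y) a)`, in the basis `1, ξ, …, ξ^{m-1}` of `GF(2^m)`
over `𝔽₂`. -/
def Pmat {m : ℕ} (ξ : GaloisField 2 m) (t : ℕ) (a : GaloisField 2 m) :
    Matrix (Fin m) (Fin m) (ZMod 2) :=
  Matrix.of fun i j =>
    if t = 0 then tr (ξ ^ (i : ℕ) * ξ ^ (j : ℕ) * a)
    else tr ((ξ ^ (i : ℕ) * (ξ ^ (j : ℕ)) ^ (2 ^ t) + (ξ ^ (i : ℕ)) ^ (2 ^ t) * ξ ^ (j : ℕ)) * a)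

/-- The quadratic form `x P xᵀ` evaluated in `ℤ₄` (the `0/1` entries of `P` and `x`
being lifted to `ℤ₄`). -/
def qform {m : ℕ} (P : Matrix (Fin m) (Fin m) (ZMod 2)) (x : Fin m → ZMod 2) : ZMod 4 :=
  ∑ i : Fin m, ∑ j : Fin m, lift2 (x i) * lift2 (P i j) * lift2 (x j)

instance {m : ℕ} : Fintype (GaloisField 2 m) := Fintype.ofFinite _

/-! A symmetric zero-diagonal binary matrix `P` counts every off-diagonal term of `y P yᵀ` twice,
so in `ℤ₄` this form is `2·Q(y)` for the `𝔽₂`-valued upper-triangular form `Q`. For `P = P^t(a)`,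
`Q(y) = Tr(a (Y^{2^t+1} - ∑ y_j ξ^{j(2^t+1)}))`, where `Y` is the field element of `y`: the form
`u ↦ Tr(a u^{2^t+1})` has polar form `Tr(a (u v^{2^t} + u^{2^t} v))`, and `y_j² = y_j`. Hence the
defect is `2·Tr(a C)` with `C = (X+E)^{2^t+1} - X^{2^t+1} - ∑ e_j ξ^{j(2^t+1)}`, which vanishes for
all `a` iff `C = 0` because the trace form is nondegenerate. Finally, by additivity of Frobenius,
`C = E^{2^t+1} (1 + X/E + (X/E)^{2^t} + ∑ e_j (ξ^j/E)^{2^t+1})` in characteristic `2`. -/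

open Finset

theorem sum_sum_eq_sum_diag_add_sum_lt {ι M : Type*} [Fintype ι] [LinearOrder ι]
    [AddCommMonoid M] (g : ι → ι → M) :
    ∑ i, ∑ j, g i j = ∑ i, g i i + ∑ p : ι × ι with p.1 < p.2, (g p.1 p.2 + g p.2 p.1) := by
  have hgt : ∑ p : ι × ι with ¬p.1 < p.2 ∧ p.2 < p.1, g p.1 p.2
      = ∑ p : ι × ι with p.1 < p.2, g p.2 p.1 :=
    sum_equiv (Equiv.prodComm ι ι) (by simp +contextual [le_of_lt]) (by simp)
  have hdiag : ∑ p : ι × ι with ¬p.1 < p.2 ∧ ¬p.2 < p.1, g p.1 p.2 = ∑ i, g i i :=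
    sum_nbij' Prod.fst (fun i => (i, i)) (by simp) (by simp)
      (by simp +contextual [le_antisymm_iff]) (by simp)
      (by rintro ⟨i, j⟩ h; simp only [mem_filter, not_lt] at h; rw [le_antisymm h.2.1 h.2.2])
  have hnlt := sum_filter_add_sum_filter_not {p : ι × ι | ¬p.1 < p.2} (fun p => p.2 < p.1)
    fun p => g p.1 p.2
  rw [filter_filter, filter_filter, hgt, hdiag] at hnlt
  rw [sum_add_distrib, add_left_comm, add_comm (∑ i, g i i), hnlt, ← Fintype.sum_prod_type',
    add_comm, sum_filter_not_add_sum_filter]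

def double : ZMod 2 →+ ZMod 4 where
  toFun v := 2 * lift2 v
  map_zero' := by decide
  map_add' := by decide

theorem double_eq_zero_iff (v : ZMod 2) : double v = 0 ↔ v = 0 := by
  revert v; decide

theorem lift2_add_lift2 (v : ZMod 2) : lift2 v + lift2 v = double v := by
  revert v; decide

theorem lift2_mul (u v : ZMod 2) : lift2 (u * v) = lift2 u * lift2 v := by
  revert u v; decide

def upperForm {m : ℕ} (P : Matrix (Fin m) (Fin m) (ZMod 2)) (y : Fin m → ZMod 2) : ZMod 2 :=
  ∑ p : Fin m × Fin m with p.1 < p.2, y p.1 * P p.1 p.2 * y p.2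

theorem qform_eq_double_upperForm {m : ℕ} {P : Matrix (Fin m) (Fin m) (ZMod 2)}
    (hP : P.IsSymm) (hdiag : ∀ i, P i i = 0) (y : Fin m → ZMod 2) :
    qform P y = double (upperForm P y) := by
  rw [qform, sum_sum_eq_sum_diag_add_sum_lt, upperForm, map_sum]
  simp only [hdiag, show lift2 0 = 0 from rfl, mul_zero, zero_mul, sum_const_zero, zero_add]
  refine sum_congr rfl fun p _ => ?_
  rw [hP.apply, ← lift2_add_lift2, lift2_mul, lift2_mul]
  ring

theorem sum_smul_pow_char_pow {ι R : Type*} [CommRing R] (p : ℕ) [Fact p.Prime]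
    [Algebra (ZMod p) R] [CharP R p] (s : Finset ι) (c : ι → ZMod p) (w : ι → R) (n : ℕ) :
    (∑ i ∈ s, c i • w i) ^ p ^ n = ∑ i ∈ s, c i • w i ^ p ^ n := by
  simp_rw [sum_pow_char_pow, smul_pow, ZMod.pow_card_pow]

theorem sum_sum_mul_map_mul_mul {ι K L : Type*} [Fintype ι] [CommSemiring K] [Semiring L]
    [Algebra K L] (f : L →ₗ[K] K) (u v : ι → K) (w z : ι → L) :
    ∑ i, ∑ j, u i * f (w i * z j) * v j = f ((∑ i, u i • w i) * ∑ j, v j • z j) := by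
  simp_rw [sum_mul, mul_sum, map_sum, smul_mul_smul_comm, map_smul, smul_eq_mul]
  exact sum_congr rfl fun i _ => sum_congr rfl fun j _ => by ring

theorem add_pow_succ_sub_pow_succ {K : Type*} [Field K] (p : ℕ) [Fact p.Prime] [CharP K p]
    (x : K) {e : K} (he : e ≠ 0) (n : ℕ) :
    (x + e) ^ (p ^ n + 1) - x ^ (p ^ n + 1) = e ^ (p ^ n + 1) * (1 + x / e + (x / e) ^ p ^ n) := by
  rw [pow_succ, pow_succ, add_pow_char_pow, div_pow]
  field_simp
  ring

theorem forall_tr_mul_eq_zero_iff {m : ℕ} (c : GaloisField 2 m) :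
    (∀ a, tr (c * a) = 0) ↔ c = 0 := by
  refine ⟨fun h => (traceForm_nondegenerate (ZMod 2) _).1 c h, fun h a => ?_⟩
  rw [h, zero_mul, tr, map_zero]

theorem fld_ne_zero {m : ℕ} {ξ : GaloisField 2 m}
    (hξ : LinearIndependent (ZMod 2) fun j : Fin m => ξ ^ (j : ℕ)) {e : Fin m → ZMod 2}
    (he : e ≠ 0) : fld ξ e ≠ 0 :=
  fun h => he <| funext <| Fintype.linearIndependent_iff.mp hξ e h

section Field

variable {m : ℕ} (ξ : GaloisField 2 m)

theorem fld_add (x y : Fin m → ZMod 2) : fld ξ (x + y) = fld ξ x + fld ξ y := by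
  simp only [fld, Pi.add_apply, add_smul, sum_add_distrib]

theorem Pmat_isSymm (t : ℕ) (a : GaloisField 2 m) : (Pmat ξ t a).IsSymm :=
  Matrix.IsSymm.ext fun i j => by simp only [Pmat, Matrix.of_apply, mul_comm, add_comm]

variable {t : ℕ}

theorem Pmat_apply (ht : t ≠ 0) (a : GaloisField 2 m) (i j : Fin m) :
    Pmat ξ t a i j = tr (ξ ^ (i : ℕ) * (ξ ^ (j : ℕ)) ^ 2 ^ t * a)
      + tr (ξ ^ (j : ℕ) * (ξ ^ (i : ℕ)) ^ 2 ^ t * a) := by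
  rw [Pmat, Matrix.of_apply, if_neg ht]
  unfold tr
  rw [← map_add, ← add_mul, mul_comm (ξ ^ (j : ℕ))]

theorem Pmat_apply_self (ht : t ≠ 0) (a : GaloisField 2 m) (i : Fin m) : Pmat ξ t a i i = 0 := by
  rw [Pmat_apply ξ ht, CharTwo.add_self_eq_zero]

theorem upperForm_Pmat (ht : t ≠ 0) (a : GaloisField 2 m) (y : Fin m → ZMod 2) :
    upperForm (Pmat ξ t a) y =
      tr ((fld ξ y ^ (2 ^ t + 1) - ∑ j, y j • (ξ ^ (j : ℕ)) ^ (2 ^ t + 1)) * a) := by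
  set g : Fin m → Fin m → ZMod 2 :=
    fun i j => y i * tr (ξ ^ (i : ℕ) * (ξ ^ (j : ℕ)) ^ 2 ^ t * a) * y j
  have hlt : upperForm (Pmat ξ t a) y =
      ∑ p : Fin m × Fin m with p.1 < p.2, (g p.1 p.2 + g p.2 p.1) :=
    sum_congr rfl fun p _ => by simp only [g, Pmat_apply ξ ht]; ring
  have hall : ∑ i, ∑ j, g i j = tr (fld ξ y ^ (2 ^ t + 1) * a) := by
    rw [pow_succ', fld, sum_smul_pow_char_pow]
    exact sum_sum_mul_map_mul_mul ((Algebra.trace (ZMod 2) _).comp (LinearMap.mulRight _ a)) _ _ _ _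
  have hdiag : ∑ i, g i i = tr ((∑ j, y j • (ξ ^ (j : ℕ)) ^ (2 ^ t + 1)) * a) := by
    simp only [g, tr, sum_mul, map_sum, smul_mul_assoc, map_smul, smul_eq_mul]
    exact sum_congr rfl fun i _ => by rw [mul_right_comm, ← sq, ZMod.pow_card, pow_succ']
  rw [hlt, eq_sub_of_add_eq' (sum_sum_eq_sum_diag_add_sum_lt g).symm, hall, hdiag, tr, tr, tr,
    ← map_sub, sub_mul]

theorem qform_Pmat_add_sub (ht : t ≠ 0) (a : GaloisField 2 m) (x e : Fin m → ZMod 2) :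
    qform (Pmat ξ t a) (x + e) - qform (Pmat ξ t a) x =
      double (tr (((fld ξ x + fld ξ e) ^ (2 ^ t + 1) - fld ξ x ^ (2 ^ t + 1)
        - ∑ j, e j • (ξ ^ (j : ℕ)) ^ (2 ^ t + 1)) * a)) := by
  simp only [qform_eq_double_upperForm (Pmat_isSymm ξ t a) (Pmat_apply_self ξ ht a),
    ← map_sub, upperForm_Pmat ξ ht, fld_add]
  unfold tr
  rw [← map_sub, ← sub_mul]
  simp only [Pi.add_apply, add_smul, sum_add_distrib]
  congr 3
  ring

end Field

theorem dg_row_invariance_iff_field_equation_general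
    (m t : ℕ) (ht : 1 ≤ t)
    (ξ : GaloisField 2 m)
    (hξ : LinearIndependent (ZMod 2) fun j : Fin m => ξ ^ (j : ℕ))
    (x e : Fin m → ZMod 2) (he : e ≠ 0) :
    (∀ a : GaloisField 2 m,
        qform (Pmat ξ t a) (x + e) - qform (Pmat ξ t a) x = 0) ↔
      1 + fld ξ x / fld ξ e + (fld ξ x / fld ξ e) ^ 2 ^ t +
          ∑ j : Fin m, e j • (ξ ^ (j : ℕ) / fld ξ e) ^ (2 ^ t + 1) = 0 := by
  have ht0 : t ≠ 0 := by omega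
  have hE := fld_ne_zero hξ he
  simp_rw [qform_Pmat_add_sub ξ ht0, double_eq_zero_iff, forall_tr_mul_eq_zero_iff,
    add_pow_succ_sub_pow_succ 2 _ hE, CharTwo.sub_eq_add]
  have hsum : ∑ j, e j • (ξ ^ (j : ℕ)) ^ (2 ^ t + 1) =
      fld ξ e ^ (2 ^ t + 1) * ∑ j, e j • (ξ ^ (j : ℕ) / fld ξ e) ^ (2 ^ t + 1) := by
    simp_rw [mul_sum, mul_smul_comm, div_pow, mul_div_cancel₀ _ (pow_ne_zero _ hE)]
  rw [hsum, ← mul_add, mul_eq_zero, or_iff_right (pow_ne_zero _ hE)]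

/-- For `t ≥ 1` and binary `m`-tuples `x`, `e` with `e ≠ 0`
(identified with field elements of `GF(2^m)`), the invariance
`(x ⊕ e) P^t(a) (x ⊕ e)ᵀ − x P^t(a) xᵀ ≡ 0 (mod 4)` holds for every `a ∈ GF(2^m)` if
and only if `1 + (x/e) + (x/e)^{2^t} + ∑_j e_j (ξ^j / e)^{2^t+1} = 0` in `GF(2^m)`. -/
theorem dg_row_invariance_iff_field_equation
    (m t : ℕ) (hm : 0 < m) (ht : 1 ≤ t)
    (ξ : GaloisField 2 m)
    (hξ : LinearIndependent (ZMod 2) fun j : Fin m => ξ ^ (j : ℕ))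
    (x e : Fin m → ZMod 2) (he : e ≠ 0) :
    (∀ a : GaloisField 2 m,
        qform (Pmat ξ t a) (x + e) - qform (Pmat ξ t a) x = 0) ↔
      1 + fld ξ x / fld ξ e + (fld ξ x / fld ξ e) ^ 2 ^ t +
          ∑ j : Fin m, e j • (ξ ^ (j : ℕ) / fld ξ e) ^ (2 ^ t + 1) = 0 :=
  dg_row_invariance_iff_field_equation_general m t ht ξ hξ x e he

end DGPaper
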